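/- For every integer l > 1 and each choice of sign ε ∈ {+1,−1}, the eigenspace S₄(l)_ε is spanned by the symmetrized classes xy(u,v)_ε = (xy(u,v) + ε·i(xy(u,v)))/2, over all pairs (u,v) ∈ (ℤ/lℤ)² with gcd(u,v,l) = 1. -/

import Mathlib

open scoped BigOperators

namespace MW

variable (l : ℕ)

/-- Index type for the basis symbols: `0 ↦ x²`, `1 ↦ xy`, `2 ↦ y²`. -/
abbrev Sym := Fin 3 × ZMod l × ZMod l

/-- The free ℂ-vector space on the symbols. -/
abbrev V := Sym l →₀ ℂ

/-- `gcd(u,v,l) = 1`. -/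
def copr (u v : ZMod l) : Prop := Nat.gcd (Nat.gcd (ZMod.val u) (ZMod.val v)) l = 1

instance (u v : ZMod l) : Decidable (copr l u v) := by unfold copr; infer_instance

noncomputable def X2 (u v : ZMod l) : V l := Finsupp.single (0, u, v) 1
noncomputable def XY (u v : ZMod l) : V l := Finsupp.single (1, u, v) 1
noncomputable def Y2 (u v : ZMod l) : V l := Finsupp.single (2, u, v) 1

/-- The relation subspace: the relations of Merel–Shokurov on coprime symbols,
together with the (dummy) basis vectors at non-coprime indices. -/
noncomputable def Rel : Submodule ℂ (V l) :=
  Submodule.span ℂ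
    ({ w | ∃ u v, ¬ copr l u v ∧ (w = X2 l u v ∨ w = XY l u v ∨ w = Y2 l u v) } ∪
     { w | ∃ u v, copr l u v ∧
        (w = X2 l u v + Y2 l v (-u) ∨
         w = XY l u v - XY l v (-u) ∨
         w = Y2 l u v + X2 l v (-u) ∨
         w = XY l v (-u - v) - XY l (-u - v) u + Y2 l (-u - v) u + X2 l u v - XY l u v) })

/-- The space of weight four modular symbols of level `l`. -/
abbrev M := V l ⧸ Rel l

noncomputable def x2 (u v : ZMod l) : M l := Submodule.Quotient.mk (X2 l u v)
noncomputable def xy (u v : ZMod l) : M l := Submodule.Quotient.mk (XY l u v)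
noncomputable def y2 (u v : ZMod l) : M l := Submodule.Quotient.mk (Y2 l u v)

/-- The class of `p₂·x²(u,v) + p₁·xy(u,v) + p₀·y²(u,v)` in `M l`. -/
noncomputable def pcl (p2 p1 p0 : ℂ) (u v : ZMod l) : M l :=
  p2 • x2 l u v + p1 • xy l u v + p0 • y2 l u v

/-- Reduction `ZMod l → ZMod (gcd(a,l))`. -/
noncomputable def castg (a : ZMod l) : ZMod l →+* ZMod (Nat.gcd (ZMod.val a) l) :=
  ZMod.castHom (Nat.gcd_dvd_right (ZMod.val a) l) (ZMod (Nat.gcd (ZMod.val a) l))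

/-- The functional on `V l` attached to the cusp data `(a, b)`. -/
noncomputable def psiV (a : ZMod l) (b : ZMod (Nat.gcd (ZMod.val a) l)) : V l →ₗ[ℂ] ℂ :=
  Finsupp.lift ℂ ℂ (Sym l) fun p =>
    if copr l p.2.1 p.2.2 then
      (if p.1 = 0 then
        ((if p.2.1 = a ∧ castg l a p.2.2 = b then (1 : ℂ) else 0) +
         (if p.2.1 = -a ∧ castg l a p.2.2 = -b then (1 : ℂ) else 0))
       else if p.1 = 2 then
        (-(if p.2.2 = a ∧ castg l a p.2.1 = -b then (1 : ℂ) else 0) -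
          (if p.2.2 = -a ∧ castg l a p.2.1 = b then (1 : ℂ) else 0))
       else 0)
    else 0

/-- The cuspidal subspace `S₄(l) ⊆ M₄(l)`: the (image in `M l` of the) intersection
of the kernels of all the functionals `ψ_{(a,b)}`. -/
noncomputable def S : Submodule ℂ (M l) :=
  Submodule.map (Rel l).mkQ
    (⨅ (a : ZMod l), ⨅ (b : ZMod (Nat.gcd (ZMod.val a) l)), ⨅ (_ : IsUnit b),
      LinearMap.ker (psiV l a b))

/-- The linear map on `V l` underlying the involution `i`:
`x²(u,v) ↦ x²(-u,v)`, `xy(u,v) ↦ -xy(-u,v)`, `y²(u,v) ↦ y²(-u,v)`. -/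
noncomputable def iV : V l →ₗ[ℂ] V l :=
  Finsupp.lift (V l) ℂ (Sym l) fun p =>
    if p.1 = 1 then -(Finsupp.single (1, -p.2.1, p.2.2) (1 : ℂ))
    else Finsupp.single (p.1, -p.2.1, p.2.2) (1 : ℂ)

end MW

/-! Modulo the classes `xy(u,v)`, the relations give `y²(u,v) = -x²(v,-u)`, `x²(-u,-v) = x²(u,v)`
and `x²(u,v) = x²(u,u+v)`. Since `u` generates the ideal `gcd(u,l)` of `ℤ/l`, iterating the last one
shows that `x²(u,v)` only depends on the cusp `(u, v mod gcd(u,l))`. So every symbol is congruent,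
modulo the span of the `xy(u,v)`, to a combination of `x²` at cusps whose coefficients form its
boundary, and the functionals `ψ_{(a,b)}` are exactly the coordinates of the boundary. Hence
`S₄(l)` is the span of the `xy(u,v)`. The involution sends `xy(u,v)` to `-xy(-u,v)`, so it is an
involution of this span, whose `ε`-eigenspace is the image of the projector `(1 + ε i)/2`. -/

theorem Nat.cast_gcd_eq_gcdA_gcdB {R : Type*} [CommRing R] (m n : ℕ) :
    ((Nat.gcd m n : ℕ) : R) = m * (Nat.gcdA m n : R) + n * (Nat.gcdB m n : R) := by
  exact_mod_cast congrArg (Int.cast : ℤ → R) (Nat.gcd_eq_gcd_ab m n)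

theorem setOf_mem_span_and_eq_smul_eq_span {K E : Type*} [Field K] [AddCommGroup E] [Module K E]
    (h2 : (2 : K) ≠ 0) (J : E →ₗ[K] E) {ε : K} (hε : ε * ε = 1) {G : Set E}
    (hJG : ∀ x ∈ G, J x ∈ Submodule.span K G) (hJJ : ∀ x ∈ G, J (J x) = x) :
    {m | m ∈ Submodule.span K G ∧ J m = ε • m} =
      Submodule.span K ((fun x => (2 : K)⁻¹ • (x + ε • J x)) '' G) := by
  set P : E →ₗ[K] E := (2 : K)⁻¹ • (LinearMap.id + ε • J)
  have hP : ∀ x, P x = (2 : K)⁻¹ • (x + ε • J x) := fun _ => rfl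
  have hJspan : ∀ m ∈ Submodule.span K G, J m ∈ Submodule.span K G := fun m hm =>
    Submodule.span_le.mpr (by rintro _ ⟨x, hx, rfl⟩; exact hJG x hx)
      (Submodule.apply_mem_span_image_of_mem_span J hm)
  have hJJspan : ∀ m ∈ Submodule.span K G, J (J m) = m := fun m hm =>
    LinearMap.eqOn_span' (f := J ∘ₗ J) (g := LinearMap.id) hJJ hm
  ext m
  constructor
  · rintro ⟨hm, hJm⟩
    have hPm : P m = m := by
      rw [hP, hJm, smul_smul, hε, one_smul, ← two_smul K m, smul_smul, inv_mul_cancel₀ h2, one_smul]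
    simpa only [hPm, funext hP, SetLike.mem_coe] using Submodule.apply_mem_span_image_of_mem_span P hm
  · intro hm
    induction hm using Submodule.span_induction with
    | mem x hx =>
      obtain ⟨y, hy, rfl⟩ := hx
      have hyspan := Submodule.subset_span (R := K) hy
      refine ⟨Submodule.smul_mem _ _ (add_mem hyspan (Submodule.smul_mem _ _ (hJspan y hyspan))), ?_⟩
      rw [map_smul, map_add, map_smul, hJJspan y hyspan, smul_comm ε, smul_add ε, smul_smul ε ε, hε,
        one_smul, add_comm]
    | zero => simp
    | add x y _ _ hx hy => exact ⟨add_mem hx.1 hy.1, by rw [map_add, hx.2, hy.2, smul_add]⟩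
    | smul c x _ hx => exact ⟨Submodule.smul_mem _ _ hx.1, by rw [map_smul, hx.2, smul_comm]⟩

namespace MW

section Arithmetic

variable {l : ℕ} [NeZero l]

instance (a : ZMod l) : NeZero (Nat.gcd (ZMod.val a) l) :=
  ⟨(Nat.gcd_pos_of_pos_right _ (Nat.pos_of_neZero l)).ne'⟩

lemma dvd_natCast_gcd_val (a : ZMod l) : a ∣ ((Nat.gcd a.val l : ℕ) : ZMod l) :=
  ⟨Nat.gcdA a.val l, by simp [Nat.cast_gcd_eq_gcdA_gcdB]⟩

lemma castg_apply (a x : ZMod l) : castg l a x = (x.val : ZMod (Nat.gcd a.val l)) := by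
  rw [castg, ZMod.castHom_apply, ZMod.cast_eq_val]

lemma castg_self (a : ZMod l) : castg l a a = 0 := by
  rw [castg_apply, ZMod.natCast_eq_zero_iff]
  exact Nat.gcd_dvd_left _ _

lemma dvd_of_castg_eq_zero {a x : ZMod l} (h : castg l a x = 0) : a ∣ x := by
  rw [castg_apply, ZMod.natCast_eq_zero_iff] at h
  obtain ⟨m, hm⟩ := h
  rw [← ZMod.natCast_zmod_val x, hm, Nat.cast_mul]
  exact (dvd_natCast_gcd_val a).mul_right _

lemma castg_natCast_val (a x : ZMod l) :
    castg l a ((castg l a x).val : ZMod l) = castg l a x := by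
  rw [map_natCast, ZMod.natCast_zmod_val]

lemma isUnit_castg {u v : ZMod l} (h : IsCoprime u v) : IsUnit (castg l u v) := by
  simpa [castg_self, isCoprime_zero_left] using h.map (castg l u)

lemma copr_iff_isCoprime {u v : ZMod l} : copr l u v ↔ IsCoprime u v := by
  constructor
  · intro h
    obtain ⟨s, t, hst⟩ := Nat.isCoprime_iff_coprime.mpr h
    have hst' := congrArg (Int.cast : ℤ → ZMod l) hst
    push_cast [Nat.cast_gcd_eq_gcdA_gcdB, ZMod.natCast_self, ZMod.natCast_zmod_val] at hst'
    exact ⟨s * Nat.gcdA u.val v.val, s * Nat.gcdB u.val v.val, by linear_combination hst'⟩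
  · intro h
    set e := Nat.gcd (Nat.gcd u.val v.val) l
    have hzero : ∀ {x : ZMod l}, e ∣ x.val → ZMod.castHom (Nat.gcd_dvd_right _ l) (ZMod e) x = 0 :=
      fun hx => by rwa [ZMod.castHom_apply, ZMod.cast_eq_val, ZMod.natCast_eq_zero_iff]
    have h0 := h.map (ZMod.castHom (Nat.gcd_dvd_right _ l) (ZMod e))
    rw [hzero ((Nat.gcd_dvd_left _ _).trans (Nat.gcd_dvd_left _ _)),
      hzero ((Nat.gcd_dvd_left _ _).trans (Nat.gcd_dvd_right _ _)),
      isCoprime_zero_left, isUnit_zero_iff] at h0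
    exact ZMod.subsingleton_iff.mp (subsingleton_of_zero_eq_one h0)

end Arithmetic

section Relations

variable {l : ℕ}

noncomputable def xySpan (l : ℕ) : Submodule ℂ (M l) :=
  Submodule.span ℂ {t | ∃ u v, copr l u v ∧ t = xy l u v}

lemma xy_mem_xySpan (u v : ZMod l) : xy l u v ∈ xySpan l := by
  by_cases h : copr l u v
  · exact Submodule.subset_span ⟨u, v, h, rfl⟩
  · convert (xySpan l).zero_mem
    rw [xy, Submodule.Quotient.mk_eq_zero]
    exact Submodule.subset_span (Or.inl ⟨u, v, h, Or.inr (Or.inl rfl)⟩)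

variable [NeZero l] {u v w : ZMod l}

lemma x2_add_y2_eq_zero (h : IsCoprime u v) : x2 l u v + y2 l v (-u) = 0 := by
  rw [x2, y2, ← Submodule.Quotient.mk_add, Submodule.Quotient.mk_eq_zero]
  exact Submodule.subset_span (Or.inr ⟨u, v, copr_iff_isCoprime.mpr h, Or.inl rfl⟩)

lemma y2_add_x2_eq_zero (h : IsCoprime u v) : y2 l u v + x2 l v (-u) = 0 := by
  rw [x2, y2, ← Submodule.Quotient.mk_add, Submodule.Quotient.mk_eq_zero]
  exact Submodule.subset_span
    (Or.inr ⟨u, v, copr_iff_isCoprime.mpr h, Or.inr (Or.inr (Or.inl rfl))⟩)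

lemma three_term_relation (h : IsCoprime u v) :
    xy l v (-u - v) - xy l (-u - v) u + y2 l (-u - v) u + x2 l u v - xy l u v = 0 := by
  simp only [x2, y2, xy, ← Submodule.Quotient.mk_add, ← Submodule.Quotient.mk_sub,
    Submodule.Quotient.mk_eq_zero]
  exact Submodule.subset_span
    (Or.inr ⟨u, v, copr_iff_isCoprime.mpr h, Or.inr (Or.inr (Or.inr rfl))⟩)

lemma x2_neg_neg (h : IsCoprime u v) : x2 l (-u) (-v) = x2 l u v := by
  rw [eq_neg_of_add_eq_zero_right (y2_add_x2_eq_zero h.symm.neg_right),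
    eq_neg_of_add_eq_zero_left (x2_add_y2_eq_zero h)]

lemma x2_sub_x2_add_mem (h : IsCoprime u v) : x2 l u v - x2 l u (u + v) ∈ xySpan l := by
  have h' : IsCoprime (-u - v) u := by
    convert (h.symm.add_mul_right_left 1).neg_left using 1
    ring
  have hrel := y2_add_x2_eq_zero (l := l) h'
  rw [show -(-u - v) = u + v by ring] at hrel
  have hx2 : x2 l u v - x2 l u (u + v) = xy l u v + xy l (-u - v) u - xy l v (-u - v) := by
    linear_combination (norm := module) three_term_relation h - hrel
  rw [hx2]
  exact sub_mem (add_mem (xy_mem_xySpan u v) (xy_mem_xySpan _ _)) (xy_mem_xySpan _ _)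

lemma x2_sub_x2_add_mul_mem (h : IsCoprime u v) (c : ZMod l) :
    x2 l u v - x2 l u (v + u * c) ∈ xySpan l := by
  rw [← ZMod.natCast_zmod_val c]
  induction c.val with
  | zero => simp
  | succ n ih =>
    have hstep := x2_sub_x2_add_mem (l := l) (h.add_mul_left_right n)
    rw [show u + (v + u * n) = v + u * (n + 1 : ℕ) by push_cast; ring] at hstep
    simpa using add_mem ih hstep

lemma x2_sub_x2_mem_of_castg_eq (h : IsCoprime u v) (hvw : castg l u v = castg l u w) :
    x2 l u v - x2 l u w ∈ xySpan l := by
  obtain ⟨c, hc⟩ :=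
    dvd_of_castg_eq_zero (show castg l u (w - v) = 0 by rw [map_sub, hvw, sub_self])
  rw [show w = v + u * c by rw [← hc]; ring]
  exact x2_sub_x2_add_mul_mem h c

end Relations

section Boundary

variable {l : ℕ}

/-- The cusp `(u, v mod gcd(u,l))`; the residue lives in a type depending on `u`, so its `val` is
stored instead. -/
noncomputable def cusp (u v : ZMod l) : ZMod l × ℕ := (u, (castg l u v).val)

noncomputable def cuspPair (u v : ZMod l) : ZMod l × ℕ →₀ ℂ :=
  Finsupp.single (cusp u v) 1 + Finsupp.single (cusp (-u) (-v)) 1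

noncomputable def boundary (l : ℕ) : V l →ₗ[ℂ] (ZMod l × ℕ →₀ ℂ) :=
  Finsupp.lift _ ℂ (Sym l) fun p =>
    if copr l p.2.1 p.2.2 then
      if p.1 = 0 then cuspPair p.2.1 p.2.2
      else if p.1 = 2 then -cuspPair p.2.2 (-p.2.1)
      else 0
    else 0

noncomputable def x2OfCusps (l : ℕ) : (ZMod l × ℕ →₀ ℂ) →ₗ[ℂ] M l :=
  Finsupp.lift _ ℂ _ fun c => (2 : ℂ)⁻¹ • x2 l c.1 c.2

variable {u v : ZMod l}

lemma boundary_X2 (h : copr l u v) : boundary l (X2 l u v) = cuspPair u v := by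
  simp [boundary, X2, h]

lemma boundary_XY : boundary l (XY l u v) = 0 := by
  simp [boundary, XY]

lemma boundary_Y2 (h : copr l u v) : boundary l (Y2 l u v) = -cuspPair v (-u) := by
  simp [boundary, Y2, h]

lemma boundary_single_of_not_copr (h : ¬ copr l u v) (i : Fin 3) :
    boundary l (Finsupp.single (i, u, v) 1) = 0 := by
  simp [boundary, h]

lemma cuspPair_mem_supported (h : IsCoprime u v) :
    cuspPair u v ∈ Finsupp.supported ℂ ℂ {c | ∃ u v : ZMod l, IsCoprime u v ∧ c = cusp u v} :=
  add_mem (Finsupp.single_mem_supported ℂ _ ⟨u, v, h, rfl⟩)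
    (Finsupp.single_mem_supported ℂ _ ⟨-u, -v, h.neg_neg, rfl⟩)

variable [NeZero l]

lemma cusp_eq_iff {a : ZMod l} {b : ZMod (Nat.gcd a.val l)} :
    cusp u v = (a, b.val) ↔ u = a ∧ castg l a v = b := by
  constructor
  · intro h
    obtain ⟨rfl, hb⟩ := Prod.ext_iff.mp h
    exact ⟨rfl, ZMod.val_injective _ hb⟩
  · rintro ⟨rfl, rfl⟩
    rfl

lemma cuspPair_apply (u v a : ZMod l) (b : ZMod (Nat.gcd a.val l)) :
    cuspPair u v (a, b.val) =
      (if u = a ∧ castg l a v = b then 1 else 0) +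
        (if u = -a ∧ castg l a v = -b then 1 else 0) := by
  simp only [cuspPair, Finsupp.add_apply, Finsupp.single_apply, cusp_eq_iff, neg_eq_iff_eq_neg,
    map_neg]

lemma psiV_eq_boundary_apply (a : ZMod l) (b : ZMod (Nat.gcd a.val l)) (f : V l) :
    psiV l a b f = boundary l f (a, b.val) := by
  induction f using Finsupp.induction_linear with
  | zero => simp
  | add f g hf hg => simp [hf, hg]
  | single p c =>
    simp only [psiV, boundary, Finsupp.lift_apply, Finsupp.sum_single_index, zero_smul,
      Finsupp.smul_apply]
    congr 1
    simp only [apply_ite (fun F : ZMod l × ℕ →₀ ℂ => F (a, b.val)), cuspPair_apply,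
      Finsupp.neg_apply, Finsupp.coe_zero, Pi.zero_apply, map_neg, neg_eq_iff_eq_neg, neg_neg,
      neg_add']

lemma boundary_mem_supported (f : V l) :
    boundary l f ∈ Finsupp.supported ℂ ℂ {c | ∃ u v : ZMod l, IsCoprime u v ∧ c = cusp u v} := by
  induction f using Finsupp.induction_linear with
  | zero => simp
  | add f g hf hg => simpa using add_mem hf hg
  | single p c =>
    obtain ⟨i, u, v⟩ := p
    simp only [boundary, Finsupp.lift_apply, Finsupp.sum_single_index, zero_smul]
    refine Submodule.smul_mem _ _ ?_
    split_ifs with hc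
    · exact cuspPair_mem_supported (copr_iff_isCoprime.mp hc)
    · exact neg_mem (cuspPair_mem_supported (copr_iff_isCoprime.mp hc).symm.neg_right)
    all_goals exact zero_mem _

lemma boundary_eq_zero {f : V l}
    (hf : f ∈ ⨅ (a : ZMod l), ⨅ (b : ZMod (Nat.gcd a.val l)), ⨅ (_ : IsUnit b),
      LinearMap.ker (psiV l a b)) : boundary l f = 0 := by
  ext c
  by_cases hc : ∃ u v : ZMod l, IsCoprime u v ∧ c = cusp u v
  · obtain ⟨u, v, huv, rfl⟩ := hc
    simp only [Submodule.mem_iInf, LinearMap.mem_ker] at hf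
    rw [Finsupp.zero_apply, cusp, ← psiV_eq_boundary_apply, hf u _ (isUnit_castg huv)]
  · exact (Finsupp.mem_supported' ℂ _).mp (boundary_mem_supported f) c hc

lemma x2_sub_x2_cusp_mem (h : IsCoprime u v) :
    x2 l u v - x2 l (cusp u v).1 (cusp u v).2 ∈ xySpan l :=
  x2_sub_x2_mem_of_castg_eq h (castg_natCast_val u v).symm

lemma x2_sub_x2OfCusps_cuspPair_mem (h : IsCoprime u v) :
    x2 l u v - x2OfCusps l (cuspPair u v) ∈ xySpan l := by
  have hsplit : x2 l u v - x2OfCusps l (cuspPair u v) =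
      (2 : ℂ)⁻¹ • (x2 l u v - x2 l (cusp u v).1 (cusp u v).2) +
        (2 : ℂ)⁻¹ • (x2 l (-u) (-v) - x2 l (cusp (-u) (-v)).1 (cusp (-u) (-v)).2) := by
    rw [x2_neg_neg h]
    simp only [x2OfCusps, cuspPair, map_add, Finsupp.lift_apply, Finsupp.sum_single_index,
      zero_smul, one_smul]
    module
  rw [hsplit]
  exact add_mem (Submodule.smul_mem _ _ (x2_sub_x2_cusp_mem h))
    (Submodule.smul_mem _ _ (x2_sub_x2_cusp_mem h.neg_neg))

lemma mkQ_sub_x2OfCusps_boundary_mem (f : V l) :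
    (Rel l).mkQ f - x2OfCusps l (boundary l f) ∈ xySpan l := by
  induction f using Finsupp.induction_linear with
  | zero => simp
  | add f g hf hg => simpa [add_sub_add_comm] using add_mem hf hg
  | single p c =>
    rw [← mul_one c, ← smul_eq_mul, ← Finsupp.smul_single, map_smul, map_smul, map_smul,
      ← smul_sub]
    refine Submodule.smul_mem _ _ ?_
    obtain ⟨i, u, v⟩ := p
    by_cases hc : copr l u v
    · fin_cases i
      · change x2 l u v - x2OfCusps l (boundary l (X2 l u v)) ∈ xySpan l
        rw [boundary_X2 hc]
        exact x2_sub_x2OfCusps_cuspPair_mem (copr_iff_isCoprime.mp hc)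
      · change xy l u v - x2OfCusps l (boundary l (XY l u v)) ∈ xySpan l
        simpa [boundary_XY] using xy_mem_xySpan u v
      · change y2 l u v - x2OfCusps l (boundary l (Y2 l u v)) ∈ xySpan l
        rw [boundary_Y2 hc]
        rw [copr_iff_isCoprime] at hc
        rw [eq_neg_of_add_eq_zero_left (y2_add_x2_eq_zero hc), map_neg, neg_sub_neg]
        exact sub_mem_comm_iff.mp (x2_sub_x2OfCusps_cuspPair_mem hc.symm.neg_right)
    · rw [boundary_single_of_not_copr hc, map_zero, sub_zero, Submodule.mkQ_apply]
      convert (xySpan l).zero_mem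
      rw [Submodule.Quotient.mk_eq_zero]
      apply Submodule.subset_span
      fin_cases i
      exacts [Or.inl ⟨u, v, hc, Or.inl rfl⟩, Or.inl ⟨u, v, hc, Or.inr (Or.inl rfl)⟩,
        Or.inl ⟨u, v, hc, Or.inr (Or.inr rfl)⟩]

end Boundary

lemma S_eq_xySpan {l : ℕ} [NeZero l] : S l = xySpan l := by
  apply le_antisymm
  · rintro _ ⟨f, hf, rfl⟩
    simpa [boundary_eq_zero hf] using mkQ_sub_x2OfCusps_boundary_mem f
  · refine Submodule.span_le.mpr ?_
    rintro _ ⟨u, v, -, rfl⟩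
    refine ⟨XY l u v, ?_, rfl⟩
    simp [psiV, XY]

lemma mapQ_iV_xy {l : ℕ} (hi : Rel l ≤ (Rel l).comap (iV l)) (u v : ZMod l) :
    Submodule.mapQ (Rel l) (Rel l) (iV l) hi (xy l u v) = -xy l (-u) v := by
  simp [xy, XY, iV, Submodule.mapQ_apply, Submodule.Quotient.mk_neg]

end MW

open MW in
theorem stmt2 (l : ℕ) (hl : 1 < l)
    (hi : Rel l ≤ (Rel l).comap (iV l)) (ε : ℂ) (hε : ε = 1 ∨ ε = -1) :
    {m : M l | m ∈ S l ∧ Submodule.mapQ (Rel l) (Rel l) (iV l) hi m = ε • m} =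
      ↑(Submodule.span ℂ {t : M l | ∃ u v : ZMod l, copr l u v ∧
          t = (2 : ℂ)⁻¹ • (xy l u v +
            ε • Submodule.mapQ (Rel l) (Rel l) (iV l) hi (xy l u v))}) := by
  have : NeZero l := ⟨by omega⟩
  have hε2 : ε * ε = 1 := by rcases hε with rfl | rfl <;> norm_num
  rw [S_eq_xySpan, xySpan, setOf_mem_span_and_eq_smul_eq_span two_ne_zero _ hε2]
  · congr 2
    ext t
    constructor
    · rintro ⟨_, ⟨u, v, huv, rfl⟩, rfl⟩
      exact ⟨u, v, huv, rfl⟩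
    · rintro ⟨u, v, huv, rfl⟩
      exact ⟨_, ⟨u, v, huv, rfl⟩, rfl⟩
  · rintro _ ⟨u, v, huv, rfl⟩
    rw [mapQ_iV_xy]
    exact neg_mem (Submodule.subset_span
      ⟨-u, v, copr_iff_isCoprime.mpr (copr_iff_isCoprime.mp huv).neg_left, rfl⟩)
  · rintro _ ⟨u, v, -, rfl⟩
    rw [mapQ_iV_xy, map_neg, mapQ_iV_xy, neg_neg, neg_neg]
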